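/- Define G(p) = t_e π̄ − t_s π̄ F(p)·(1 − (t_r/t_k)(1 − F(p))) + t_s ∫_{π̲}^{p} x f(x) dx. Then G is nonincreasing on the region {p ∈ [π̲, π̄] : F(p) ≥ 1/2}: for all p ≤ p' in [π̲, π̄] with F(p) ≥ 1/2, G(p') ≤ G(p). (Indeed G'(p) = (p − π̄) t_s f(p) + (t_r t_s/t_k) π̄ f(p)(1 − 2F(p)) ≤ 0 there.) -/

import Mathlib

/-! Write `a = F p`, `b = F p'` and `c = t_r / t_k`. Since
`F (1 - c (1 - F)) = F + c F (F - 1)`, the difference `G p' - G p` equals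
`t_s (∫_p^{p'} x f - π̄ (b - a)) - t_s π̄ c (b (b - 1) - a (a - 1))`.
The first bracket is `≤ 0` because `x ≤ π̄` and `b - a = ∫_p^{p'} f` with `f ≥ 0`;
the second is `≥ 0` because `q ↦ q (q - 1)` increases from `a` to `b` whenever `a ≤ b`
and `a + b ≥ 1`. -/

open Set intervalIntegral MeasureTheory

lemma mul_sub_one_le_mul_sub_one {a b : ℝ} (hab : a ≤ b) (hsum : 1 ≤ a + b) :
    a * (a - 1) ≤ b * (b - 1) := by
  nlinarith [mul_nonneg (sub_nonneg.mpr hab) (sub_nonneg.mpr hsum)]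

lemma integral_id_mul_le_mul_integral {f : ℝ → ℝ} {a b : ℝ} (hab : a ≤ b)
    (hf : IntervalIntegrable f volume a b) (hf0 : ∀ x ∈ Icc a b, 0 ≤ f x) :
    ∫ x in a..b, x * f x ≤ b * ∫ x in a..b, f x := by
  rw [← intervalIntegral.integral_const_mul]
  exact integral_mono_on hab (hf.continuousOn_mul continuousOn_id) (hf.const_mul b)
    fun x hx => mul_le_mul_of_nonneg_right hx.2 (hf0 x hx)

theorem stmt_14
    (πlo πhi : ℝ) (f F : ℝ → ℝ)
    (hπlo : 0 ≤ πlo)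
    (hcont : ContinuousOn f (Set.Icc πlo πhi))
    (hnn : ∀ x ∈ Set.Icc πlo πhi, 0 ≤ f x)
    (hF : ∀ p, F p = ∫ x in πlo..p, f x)
    (tk te ts tr : ℝ) (htk : 0 < tk) (hts : 0 < ts) (htr : 0 < tr)
    (G : ℝ → ℝ)
    (hG : ∀ p, G p = te * πhi - ts * πhi * F p * (1 - (tr / tk) * (1 - F p)) +
      ts * ∫ x in πlo..p, x * f x)
    (p p' : ℝ) (hp : p ∈ Set.Icc πlo πhi) (hp' : p' ∈ Set.Icc πlo πhi)
    (hpp' : p ≤ p') (hFp : 1 / 2 ≤ F p) :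
    G p' ≤ G p := by
  have hfint {u v : ℝ} (hu : u ∈ Icc πlo πhi) (hv : v ∈ Icc πlo πhi) :
      IntervalIntegrable f volume u v :=
    (hcont.mono (uIcc_subset_Icc hu hv)).intervalIntegrable
  have hlo : πlo ∈ Icc πlo πhi := ⟨le_rfl, hp.1.trans hp.2⟩
  have hf0 : ∀ x ∈ Icc p p', 0 ≤ f x := fun x hx => hnn x ⟨hp.1.trans hx.1, hx.2.trans hp'.2⟩
  have hdF : F p' - F p = ∫ x in p..p', f x := by
    rw [hF, hF, integral_interval_sub_left (hfint hlo hp') (hfint hlo hp)]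
  have hdJ : (∫ x in πlo..p', x * f x) - ∫ x in πlo..p, x * f x = ∫ x in p..p', x * f x :=
    integral_interval_sub_left ((hfint hlo hp').continuousOn_mul continuousOn_id)
      ((hfint hlo hp).continuousOn_mul continuousOn_id)
  have hFmono : 0 ≤ F p' - F p := hdF ▸ integral_nonneg hpp' hf0
  have hJ : ∫ x in p..p', x * f x ≤ πhi * (F p' - F p) :=
    calc ∫ x in p..p', x * f x ≤ p' * (F p' - F p) :=
          hdF ▸ integral_id_mul_le_mul_integral hpp' (hfint hp hp') hf0
      _ ≤ πhi * (F p' - F p) := mul_le_mul_of_nonneg_right hp'.2 hFmono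
  have hquad : 0 ≤ ts * πhi * (tr / tk) * (F p' * (F p' - 1) - F p * (F p - 1)) := by
    have : 0 ≤ πhi := hπlo.trans (hp.1.trans hp.2)
    have hFp' : F p ≤ F p' := sub_nonneg.mp hFmono
    have := sub_nonneg.mpr (mul_sub_one_le_mul_sub_one hFp' (by linarith))
    positivity
  rw [hG, hG]
  nlinarith [mul_le_mul_of_nonneg_left hJ hts.le]
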